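/- arXiv:2209.07396 — 3 statements merged into one kernel-verified Lean document; each statement's English description precedes it below -/
import Mathlib

section
/- Let X ⊆ ℝ^d be a nonempty open connected set. Let p, q : ℝ^d → ℝ be probability densities (nonnegative, Lebesgue-integrable with total integral 1) that are strictly positive and continuously differentiable on X and vanish outside X, and suppose the function x ↦ p(x)·‖∇log p(x) − ∇log q(x)‖² is integrable on X. Then the Fisher divergence FD(p||q) = (1/2)∫_X p(x)·‖∇log p(x) − ∇log q(x)‖² dx equals 0 if and only if p(x) = q(x) for all x ∈ X. -/
/-!
If `FD(p‖q) = 0`, the integrand `p ‖∇log p − ∇log q‖²` is nonnegative and continuous on the open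
set `X`, hence vanishes there; as `p > 0` on `X`, the scores agree on `X`. Since `X` is open and
connected, `log p − log q` is then constant on `X`, i.e. `p = c q` on `X`, and since both
densities vanish off `X` and integrate to `1`, the constant is `c = 1`.
-/

open MeasureTheory Set Real

theorem IsOpen.eqOn_zero_of_setIntegral_eq_zero {α : Type*} [TopologicalSpace α]
    [MeasurableSpace α] [OpensMeasurableSpace α] {μ : Measure α} [μ.IsOpenPosMeasure]
    {U : Set α} {f : α → ℝ} (hU : IsOpen U) (hf : ContinuousOn f U) (hf_nonneg : ∀ x ∈ U, 0 ≤ f x)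
    (hf_int : IntegrableOn f U μ) (h : ∫ x in U, f x ∂μ = 0) : U.EqOn f 0 := by
  have hf_ae : f =ᵐ[μ.restrict U] 0 :=
    (integral_eq_zero_iff_of_nonneg_ae (ae_restrict_of_forall_mem hU.measurableSet hf_nonneg)
      hf_int).1 h
  exact μ.eqOn_open_of_ae_eq hf_ae hU hf continuousOn_const

theorem eqOn_of_eqOn_const_mul_of_setIntegral_eq {α : Type*} [MeasurableSpace α] {μ : Measure α}
    {s : Set α} {p q : α → ℝ} {c : ℝ} (hs : MeasurableSet s) (hpq : s.EqOn p (fun x => c * q x))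
    (h_int_eq : ∫ x in s, p x ∂μ = ∫ x in s, q x ∂μ) (hq_int : ∫ x in s, q x ∂μ ≠ 0) :
    s.EqOn p q := by
  have hc : c = 1 := by
    rw [setIntegral_congr_fun hs hpq, integral_const_mul] at h_int_eq
    exact (mul_eq_right₀ hq_int).1 h_int_eq
  simpa [hc] using hpq

section Gradient

variable {F : Type*} [NormedAddCommGroup F] [InnerProductSpace ℝ F] [CompleteSpace F]
  {s : Set F}

theorem ContDiffOn.continuousOn_gradient {f : F → ℝ} (hf : ContDiffOn ℝ 1 f s) (hs : IsOpen s) :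
    ContinuousOn (gradient f) s :=
  (InnerProductSpace.toDual ℝ F).symm.continuous.comp_continuousOn
    (hf.continuousOn_fderiv_of_isOpen hs le_rfl)

theorem IsOpen.exists_eqOn_add_of_gradient_eq {f g : F → ℝ} (hs : IsOpen s)
    (hs' : IsPreconnected s) (hf : DifferentiableOn ℝ f s) (hg : DifferentiableOn ℝ g s)
    (hfg : s.EqOn (gradient f) (gradient g)) : ∃ a, s.EqOn f (g · + a) :=
  hs.exists_eq_add_of_fderiv_eq hs' hf hg fun _ hx =>
    (InnerProductSpace.toDual ℝ F).symm.injective (hfg hx)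

theorem IsOpen.exists_eqOn_const_mul_of_gradient_log_eq {p q : F → ℝ} (hs : IsOpen s)
    (hs' : IsPreconnected s) (hp : DifferentiableOn ℝ p s) (hq : DifferentiableOn ℝ q s)
    (hp_pos : ∀ x ∈ s, 0 < p x) (hq_pos : ∀ x ∈ s, 0 < q x)
    (hpq : s.EqOn (gradient fun y => log (p y)) (gradient fun y => log (q y))) :
    ∃ c, s.EqOn p (fun x => c * q x) := by
  obtain ⟨a, ha⟩ := hs.exists_eqOn_add_of_gradient_eq hs'
    (hp.log fun x hx => (hp_pos x hx).ne') (hq.log fun x hx => (hq_pos x hx).ne') hpq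
  refine ⟨exp a, fun x hx => ?_⟩
  calc p x = exp (log (p x)) := (exp_log (hp_pos x hx)).symm
    _ = exp a * q x := by
      rw [show log (p x) = log (q x) + a from ha hx, exp_add, exp_log (hq_pos x hx), mul_comm]

theorem IsOpen.eqOn_gradient_log_of_setIntegral_eq_zero [MeasurableSpace F] [OpensMeasurableSpace F]
    {μ : Measure F} [μ.IsOpenPosMeasure] {p q : F → ℝ} (hs : IsOpen s)
    (hp : ContDiffOn ℝ 1 p s) (hq : ContDiffOn ℝ 1 q s)
    (hp_pos : ∀ x ∈ s, 0 < p x) (hq_pos : ∀ x ∈ s, 0 < q x)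
    (h_int : IntegrableOn
      (fun x => p x * ‖gradient (fun y => log (p y)) x - gradient (fun y => log (q y)) x‖ ^ 2) s μ)
    (h : ∫ x in s,
      p x * ‖gradient (fun y => log (p y)) x - gradient (fun y => log (q y)) x‖ ^ 2 ∂μ = 0) :
    s.EqOn (gradient fun y => log (p y)) (gradient fun y => log (q y)) := by
  have hlp := hp.log fun x hx => (hp_pos x hx).ne'
  have hlq := hq.log fun x hx => (hq_pos x hx).ne'
  have hcont := hp.continuousOn.mul
    (((hlp.continuousOn_gradient hs).sub (hlq.continuousOn_gradient hs)).norm.pow 2)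
  intro x hx
  simpa [(hp_pos x hx).ne', sub_eq_zero] using hs.eqOn_zero_of_setIntegral_eq_zero hcont
    (fun x hx => mul_nonneg (hp_pos x hx).le (sq_nonneg _)) h_int h hx

end Gradient

theorem fisher_divergence_zero_iff_eq_on_connected_general
    {d : ℕ} (X : Set (EuclideanSpace ℝ (Fin d)))
    (hXopen : IsOpen X) (hXconn : IsConnected X)
    (p q : EuclideanSpace ℝ (Fin d) → ℝ)
    (hp_one : ∫ x, p x = 1) (hq_one : ∫ x, q x = 1)
    (hp_pos : ∀ x ∈ X, 0 < p x) (hq_pos : ∀ x ∈ X, 0 < q x)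
    (hp_diff : ContDiffOn ℝ 1 p X) (hq_diff : ContDiffOn ℝ 1 q X)
    (hp_zero : ∀ x ∉ X, p x = 0) (hq_zero : ∀ x ∉ X, q x = 0)
    (h_int : IntegrableOn (fun x =>
      p x * ‖gradient (fun y => Real.log (p y)) x
            - gradient (fun y => Real.log (q y)) x‖ ^ 2) X) :
    (1 / 2 : ℝ) * ∫ x in X,
        p x * ‖gradient (fun y => Real.log (p y)) x
              - gradient (fun y => Real.log (q y)) x‖ ^ 2 = 0
      ↔ ∀ x ∈ X, p x = q x := by
  rw [mul_eq_zero, or_iff_right one_half_pos.ne']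
  constructor
  · intro hFD
    obtain ⟨c, hc⟩ := hXopen.exists_eqOn_const_mul_of_gradient_log_eq hXconn.isPreconnected
      (hp_diff.differentiableOn one_ne_zero) (hq_diff.differentiableOn one_ne_zero) hp_pos hq_pos
      (hXopen.eqOn_gradient_log_of_setIntegral_eq_zero hp_diff hq_diff hp_pos hq_pos h_int hFD)
    have hp_one' : ∫ x in X, p x = 1 := by
      rw [setIntegral_eq_integral_of_forall_compl_eq_zero hp_zero, hp_one]
    have hq_one' : ∫ x in X, q x = 1 := by
      rw [setIntegral_eq_integral_of_forall_compl_eq_zero hq_zero, hq_one]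
    exact eqOn_of_eqOn_const_mul_of_setIntegral_eq hXopen.measurableSet hc
      (hp_one'.trans hq_one'.symm) (hq_one'.symm ▸ one_ne_zero)
  · intro hpq
    refine setIntegral_eq_zero_of_forall_eq_zero fun x hx => ?_
    have hlog : (fun y => log (p y)) =ᶠ[nhds x] fun y => log (q y) :=
      Filter.eventually_of_mem (hXopen.mem_nhds hx) fun y hy => congrArg log (hpq y hy)
    rw [hlog.gradient_eq, sub_self, norm_zero, zero_pow two_ne_zero, mul_zero]

/-- Theorem 1 (FD on a connected set): for probability densities `p, q` on `ℝ^d` that are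
strictly positive and continuously differentiable on a common nonempty open connected support
`X` (and vanish outside `X`), with integrable score difference, the Fisher divergence
`FD(p‖q) = (1/2) ∫_X p(x) ‖∇log p(x) − ∇log q(x)‖²` vanishes iff `p = q` on `X`. -/
theorem fisher_divergence_zero_iff_eq_on_connected
    {d : ℕ} (X : Set (EuclideanSpace ℝ (Fin d)))
    (hXne : X.Nonempty) (hXopen : IsOpen X) (hXconn : IsConnected X)
    (p q : EuclideanSpace ℝ (Fin d) → ℝ)
    (hp_meas : Measurable p) (hq_meas : Measurable q)
    (hp_nonneg : ∀ x, 0 ≤ p x) (hq_nonneg : ∀ x, 0 ≤ q x)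
    (hp_int : Integrable p) (hq_int : Integrable q)
    (hp_one : ∫ x, p x = 1) (hq_one : ∫ x, q x = 1)
    (hp_pos : ∀ x ∈ X, 0 < p x) (hq_pos : ∀ x ∈ X, 0 < q x)
    (hp_diff : ContDiffOn ℝ 1 p X) (hq_diff : ContDiffOn ℝ 1 q X)
    (hp_zero : ∀ x ∉ X, p x = 0) (hq_zero : ∀ x ∉ X, q x = 0)
    (h_int : IntegrableOn (fun x =>
      p x * ‖gradient (fun y => Real.log (p y)) x
            - gradient (fun y => Real.log (q y)) x‖ ^ 2) X) :
    (1 / 2 : ℝ) * ∫ x in X,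
        p x * ‖gradient (fun y => Real.log (p y)) x
              - gradient (fun y => Real.log (q y)) x‖ ^ 2 = 0
      ↔ ∀ x ∈ X, p x = q x :=
  fisher_divergence_zero_iff_eq_on_connected_general X hXopen hXconn p q hp_one hq_one hp_pos hq_pos
    hp_diff hq_diff hp_zero hq_zero h_int
end

section
/- Let g₁, g₂ : ℝ^d → ℝ be continuously differentiable probability densities with disjoint supports: there exist disjoint open sets X₁, X₂ ⊆ ℝ^d such that for each i, g_i is strictly positive on X_i and g_i and ∇g_i vanish identically outside X_i. Let 0 < α_p < 1 and 0 < α_q < 1 with α_p ≠ α_q, and set p = α_p·g₁ + (1−α_p)·g₂ and q = α_q·g₁ + (1−α_q)·g₂. Then the Fisher divergence FD(p||q) = (1/2)∫_{X₁∪X₂} p(x)·‖∇log p(x) − ∇log q(x)‖² dx equals 0, even though p ≠ q (the two densities differ on X₁). Hence the Fisher divergence is not a valid divergence on disconnected supports. -/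
open MeasureTheory

/-- Equation (2) / Theorem 2 of the paper: for mixtures `p = α_p g₁ + (1−α_p) g₂` and
`q = α_q g₁ + (1−α_q) g₂` of two densities with disjoint supports `X₁, X₂`, the Fisher
divergence `(1/2)∫_{X₁∪X₂} p ‖∇log p − ∇log q‖²` is zero even though `p ≠ q`; hence the
Fisher divergence is not a valid divergence on disconnected supports. -/
theorem fisher_divergence_blind_on_disjoint_supports
    {d : ℕ} (g₁ g₂ : EuclideanSpace ℝ (Fin d) → ℝ)
    (X₁ X₂ : Set (EuclideanSpace ℝ (Fin d)))
    (hX₁ : IsOpen X₁) (hX₂ : IsOpen X₂) (hdisj : Disjoint X₁ X₂)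
    (hg₁_diff : ContDiff ℝ 1 g₁) (hg₂_diff : ContDiff ℝ 1 g₂)
    (hg₁_nonneg : ∀ x, 0 ≤ g₁ x) (hg₂_nonneg : ∀ x, 0 ≤ g₂ x)
    (hg₁_int : Integrable g₁) (hg₂_int : Integrable g₂)
    (hg₁_one : ∫ x, g₁ x = 1) (hg₂_one : ∫ x, g₂ x = 1)
    (hg₁_pos : ∀ x ∈ X₁, 0 < g₁ x) (hg₂_pos : ∀ x ∈ X₂, 0 < g₂ x)
    (hg₁_zero : ∀ x ∉ X₁, g₁ x = 0 ∧ gradient g₁ x = 0)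
    (hg₂_zero : ∀ x ∉ X₂, g₂ x = 0 ∧ gradient g₂ x = 0)
    (αp αq : ℝ) (hαp₀ : 0 < αp) (hαp₁ : αp < 1) (hαq₀ : 0 < αq) (hαq₁ : αq < 1)
    (hαne : αp ≠ αq)
    (p q : EuclideanSpace ℝ (Fin d) → ℝ)
    (hp : p = fun x => αp * g₁ x + (1 - αp) * g₂ x)
    (hq : q = fun x => αq * g₁ x + (1 - αq) * g₂ x) :
    (1 / 2 : ℝ) * ∫ x in X₁ ∪ X₂,
        p x * ‖gradient (fun y => Real.log (p y)) x
              - gradient (fun y => Real.log (q y)) x‖ ^ 2 = 0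
      ∧ p ≠ q := by
  constructor
  · have hzero : Set.EqOn
        (fun x => p x * ‖gradient (fun y => Real.log (p y)) x
              - gradient (fun y => Real.log (q y)) x‖ ^ 2)
        (fun _ => (0 : ℝ)) (X₁ ∪ X₂) := by
      intro x hx
      have key : fderiv ℝ (fun y => Real.log (p y)) x
          = fderiv ℝ (fun y => Real.log (q y)) x := by
        rcases hx with hx | hx
        · have h1 : (fun y => Real.log (p y)) =ᶠ[nhds x]
              (fun y => Real.log αp + Real.log (g₁ y)) := by
            filter_upwards [hX₁.mem_nhds hx] with y hy
            have hg2 := (hg₂_zero y (Set.disjoint_left.mp hdisj hy)).1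
            rw [hp]
            simp only [hg2, mul_zero, add_zero]
            rw [← Real.log_mul (ne_of_gt hαp₀) (ne_of_gt (hg₁_pos y hy))]
          have h2 : (fun y => Real.log (q y)) =ᶠ[nhds x]
              (fun y => Real.log αq + Real.log (g₁ y)) := by
            filter_upwards [hX₁.mem_nhds hx] with y hy
            have hg2 := (hg₂_zero y (Set.disjoint_left.mp hdisj hy)).1
            rw [hq]
            simp only [hg2, mul_zero, add_zero]
            rw [← Real.log_mul (ne_of_gt hαq₀) (ne_of_gt (hg₁_pos y hy))]
          rw [h1.fderiv_eq, h2.fderiv_eq, fderiv_const_add, fderiv_const_add]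
        · have h1 : (fun y => Real.log (p y)) =ᶠ[nhds x]
              (fun y => Real.log (1 - αp) + Real.log (g₂ y)) := by
            filter_upwards [hX₂.mem_nhds hx] with y hy
            have hg1 := (hg₁_zero y (Set.disjoint_right.mp hdisj hy)).1
            rw [hp]
            simp only [hg1, mul_zero, zero_add]
            rw [← Real.log_mul (ne_of_gt (by linarith)) (ne_of_gt (hg₂_pos y hy))]
          have h2 : (fun y => Real.log (q y)) =ᶠ[nhds x]
              (fun y => Real.log (1 - αq) + Real.log (g₂ y)) := by
            filter_upwards [hX₂.mem_nhds hx] with y hy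
            have hg1 := (hg₁_zero y (Set.disjoint_right.mp hdisj hy)).1
            rw [hq]
            simp only [hg1, mul_zero, zero_add]
            rw [← Real.log_mul (ne_of_gt (by linarith)) (ne_of_gt (hg₂_pos y hy))]
          rw [h1.fderiv_eq, h2.fderiv_eq, fderiv_const_add, fderiv_const_add]
      have hgrad : gradient (fun y => Real.log (p y)) x
          = gradient (fun y => Real.log (q y)) x := by
        unfold gradient
        rw [key]
      simp [hgrad]
    rw [setIntegral_congr_fun (hX₁.union hX₂).measurableSet hzero]
    simp
  · have hX₁ne : X₁.Nonempty := by
      by_contra h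
      rw [Set.not_nonempty_iff_eq_empty] at h
      have hz : ∀ x, g₁ x = 0 := fun x => (hg₁_zero x (by simp [h])).1
      rw [show g₁ = fun _ => (0 : ℝ) from funext hz] at hg₁_one
      simp at hg₁_one
    obtain ⟨x₀, hx₀⟩ := hX₁ne
    intro hpq
    have hev := congrFun hpq x₀
    rw [hp, hq] at hev
    have hg2 := (hg₂_zero x₀ (Set.disjoint_left.mp hdisj hx₀)).1
    simp only [hg2, mul_zero, add_zero] at hev
    exact hαne (mul_right_cancel₀ (ne_of_gt (hg₁_pos x₀ hx₀)) hev)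
end

section
/- Let g₁, g₂ : ℝ^d → ℝ be continuously differentiable probability densities with disjoint supports: there exist disjoint open sets X₁, X₂ ⊆ ℝ^d such that for each i, g_i is strictly positive on X_i and g_i and ∇g_i vanish identically outside X_i. Let 0 < α_p < 1 and 0 < α_q < 1, and set p = α_p·g₁ + (1−α_p)·g₂ and q = α_q·g₁ + (1−α_q)·g₂. Then for any measurable kernel k : ℝ^d × ℝ^d → ℝ, the kernelized Stein discrepancy KSD(p||q) = ∫∫ p(x)·p(x')·⟨s_p(x) − s_q(x), s_p(x') − s_q(x')⟩·k(x, x') dx dx' equals 0 (the integrand vanishes identically on the support of p ⊗ p), even when α_p ≠ α_q so that p ≠ q. -/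
/-!
Scores are local. On the open set `X₁` a mixture `α g₁ + (1 - α) g₂` coincides with `α g₁`,
whose logarithm differs from `log g₁` by a constant, so every such mixture has the score of `g₁`
there, whatever `α ∈ (0, 1)`; likewise on `X₂`. Off `X₁ ∪ X₂` the weight `p x` vanishes, so the
KSD integrand vanishes identically.
-/

open MeasureTheory Filter Topology

section

variable {E : Type*} [NormedAddCommGroup E] [InnerProductSpace ℝ E] [CompleteSpace E]

theorem gradient_const_add (f : E → ℝ) (a : ℝ) (x : E) :
    gradient (fun y => a + f y) x = gradient f x := by
  simp only [gradient, fderiv_const_add]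

theorem gradient_log_const_mul {f : E → ℝ} {x : E} {c : ℝ} (hc : c ≠ 0)
    (hf : ∀ᶠ y in 𝓝 x, f y ≠ 0) :
    gradient (fun y => Real.log (c * f y)) x = gradient (fun y => Real.log (f y)) x := by
  have hlog : (fun y => Real.log (c * f y)) =ᶠ[𝓝 x] fun y => Real.log c + Real.log (f y) := by
    filter_upwards [hf] with y hy using Real.log_mul hc hy
  rw [hlog.gradient_eq, gradient_const_add]

theorem gradient_log_add_of_eventuallyEq_zero {f g : E → ℝ} {x : E} (hg : g =ᶠ[𝓝 x] 0) :
    gradient (fun y => Real.log (f y + g y)) x = gradient (fun y => Real.log (f y)) x := by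
  refine Filter.EventuallyEq.gradient_eq ?_
  filter_upwards [hg] with y hy
  simp [hy]

theorem gradient_log_mixture_of_eventuallyEq_zero {f g : E → ℝ} {x : E} {c : ℝ} (hc : c ≠ 0)
    (hf : ∀ᶠ y in 𝓝 x, f y ≠ 0) (hg : g =ᶠ[𝓝 x] 0) (a : ℝ) :
    gradient (fun y => Real.log (c * f y + a * g y)) x
      = gradient (fun y => Real.log (f y)) x := by
  have hag : (fun y => a * g y) =ᶠ[𝓝 x] 0 := by
    filter_upwards [hg] with y hy
    simp [hy]
  rw [gradient_log_add_of_eventuallyEq_zero hag, gradient_log_const_mul hc hf]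

theorem mixture_eq_zero_or_gradient_log_mixture_eq {g₁ g₂ : E → ℝ} {X₁ X₂ : Set E}
    (hX₁ : IsOpen X₁) (hX₂ : IsOpen X₂) (hdisj : Disjoint X₁ X₂)
    (hg₁_pos : ∀ x ∈ X₁, 0 < g₁ x) (hg₂_pos : ∀ x ∈ X₂, 0 < g₂ x)
    (hg₁_zero : ∀ x ∉ X₁, g₁ x = 0) (hg₂_zero : ∀ x ∉ X₂, g₂ x = 0)
    {α β : ℝ} (hα₀ : α ≠ 0) (hα₁ : α ≠ 1) (hβ₀ : β ≠ 0) (hβ₁ : β ≠ 1) (x : E) :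
    α * g₁ x + (1 - α) * g₂ x = 0 ∨
      gradient (fun y => Real.log (α * g₁ y + (1 - α) * g₂ y)) x
        = gradient (fun y => Real.log (β * g₁ y + (1 - β) * g₂ y)) x := by
  by_cases hx₁ : x ∈ X₁
  · have hg₁ : ∀ᶠ y in 𝓝 x, g₁ y ≠ 0 := by
      filter_upwards [hX₁.mem_nhds hx₁] with y hy using (hg₁_pos y hy).ne'
    have hg₂ : g₂ =ᶠ[𝓝 x] 0 := by
      filter_upwards [hX₁.mem_nhds hx₁] with y hy using hg₂_zero y (hdisj.notMem_of_mem_left hy)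
    right
    rw [gradient_log_mixture_of_eventuallyEq_zero hα₀ hg₁ hg₂,
      gradient_log_mixture_of_eventuallyEq_zero hβ₀ hg₁ hg₂]
  by_cases hx₂ : x ∈ X₂
  · have hg₂ : ∀ᶠ y in 𝓝 x, g₂ y ≠ 0 := by
      filter_upwards [hX₂.mem_nhds hx₂] with y hy using (hg₂_pos y hy).ne'
    have hg₁ : g₁ =ᶠ[𝓝 x] 0 := by
      filter_upwards [hX₂.mem_nhds hx₂] with y hy using hg₁_zero y (hdisj.notMem_of_mem_right hy)
    right
    simp only [add_comm (_ * g₁ _)]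
    rw [gradient_log_mixture_of_eventuallyEq_zero (sub_ne_zero.2 hα₁.symm) hg₂ hg₁,
      gradient_log_mixture_of_eventuallyEq_zero (sub_ne_zero.2 hβ₁.symm) hg₂ hg₁]
  · left
    simp [hg₁_zero x hx₁, hg₂_zero x hx₂]

end

theorem ksd_blind_on_disjoint_supports_general
    {d : ℕ} (g₁ g₂ : EuclideanSpace ℝ (Fin d) → ℝ)
    (X₁ X₂ : Set (EuclideanSpace ℝ (Fin d)))
    (hX₁ : IsOpen X₁) (hX₂ : IsOpen X₂) (hdisj : Disjoint X₁ X₂)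
    (hg₁_pos : ∀ x ∈ X₁, 0 < g₁ x) (hg₂_pos : ∀ x ∈ X₂, 0 < g₂ x)
    (hg₁_zero : ∀ x ∉ X₁, g₁ x = 0 ∧ gradient g₁ x = 0)
    (hg₂_zero : ∀ x ∉ X₂, g₂ x = 0 ∧ gradient g₂ x = 0)
    (αp αq : ℝ) (hαp₀ : 0 < αp) (hαp₁ : αp < 1) (hαq₀ : 0 < αq) (hαq₁ : αq < 1)
    (p q : EuclideanSpace ℝ (Fin d) → ℝ)
    (hp : p = fun x => αp * g₁ x + (1 - αp) * g₂ x)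
    (hq : q = fun x => αq * g₁ x + (1 - αq) * g₂ x)
    (k : EuclideanSpace ℝ (Fin d) → EuclideanSpace ℝ (Fin d) → ℝ) :
    ∫ x, ∫ x', p x * p x' *
        (inner ℝ (gradient (fun y => Real.log (p y)) x
                  - gradient (fun y => Real.log (q y)) x)
               (gradient (fun y => Real.log (p y)) x'
                  - gradient (fun y => Real.log (q y)) x') : ℝ)
        * k x x' = 0 := by
  have hscore : ∀ x, p x = 0 ∨
      gradient (fun y => Real.log (p y)) x = gradient (fun y => Real.log (q y)) x := by
    subst hp hq
    exact mixture_eq_zero_or_gradient_log_mixture_eq hX₁ hX₂ hdisj hg₁_pos hg₂_pos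
      (fun x hx => (hg₁_zero x hx).1) (fun x hx => (hg₂_zero x hx).1)
      hαp₀.ne' hαp₁.ne hαq₀.ne' hαq₁.ne
  have hintegrand : ∀ x x', p x * p x' *
      (inner ℝ (gradient (fun y => Real.log (p y)) x - gradient (fun y => Real.log (q y)) x)
        (gradient (fun y => Real.log (p y)) x' - gradient (fun y => Real.log (q y)) x') : ℝ)
      * k x x' = 0 := by
    intro x x'
    rcases hscore x with h | h
    · rw [h, zero_mul, zero_mul, zero_mul]
    · rw [h, sub_self, inner_zero_left, mul_zero, zero_mul]
  simp only [hintegrand, integral_zero]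

/-- Appendix A.5 of the paper: for mixtures `p = α_p g₁ + (1−α_p) g₂` and
`q = α_q g₁ + (1−α_q) g₂` of two densities with disjoint supports, the kernelized Stein
discrepancy `∫∫ p(x) p(x') ⟨s_p(x) − s_q(x), s_p(x') − s_q(x')⟩ k(x,x') dx dx'` equals `0`
for any measurable kernel `k`, even when `α_p ≠ α_q` so that `p ≠ q`. -/
theorem ksd_blind_on_disjoint_supports
    {d : ℕ} (g₁ g₂ : EuclideanSpace ℝ (Fin d) → ℝ)
    (X₁ X₂ : Set (EuclideanSpace ℝ (Fin d)))
    (hX₁ : IsOpen X₁) (hX₂ : IsOpen X₂) (hdisj : Disjoint X₁ X₂)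
    (hg₁_diff : ContDiff ℝ 1 g₁) (hg₂_diff : ContDiff ℝ 1 g₂)
    (hg₁_nonneg : ∀ x, 0 ≤ g₁ x) (hg₂_nonneg : ∀ x, 0 ≤ g₂ x)
    (hg₁_int : Integrable g₁) (hg₂_int : Integrable g₂)
    (hg₁_one : ∫ x, g₁ x = 1) (hg₂_one : ∫ x, g₂ x = 1)
    (hg₁_pos : ∀ x ∈ X₁, 0 < g₁ x) (hg₂_pos : ∀ x ∈ X₂, 0 < g₂ x)
    (hg₁_zero : ∀ x ∉ X₁, g₁ x = 0 ∧ gradient g₁ x = 0)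
    (hg₂_zero : ∀ x ∉ X₂, g₂ x = 0 ∧ gradient g₂ x = 0)
    (αp αq : ℝ) (hαp₀ : 0 < αp) (hαp₁ : αp < 1) (hαq₀ : 0 < αq) (hαq₁ : αq < 1)
    (p q : EuclideanSpace ℝ (Fin d) → ℝ)
    (hp : p = fun x => αp * g₁ x + (1 - αp) * g₂ x)
    (hq : q = fun x => αq * g₁ x + (1 - αq) * g₂ x)
    (k : EuclideanSpace ℝ (Fin d) → EuclideanSpace ℝ (Fin d) → ℝ)
    (hk : Measurable (Function.uncurry k)) :
    ∫ x, ∫ x', p x * p x' *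
        (inner ℝ (gradient (fun y => Real.log (p y)) x
                  - gradient (fun y => Real.log (q y)) x)
               (gradient (fun y => Real.log (p y)) x'
                  - gradient (fun y => Real.log (q y)) x') : ℝ)
        * k x x' = 0 :=
  ksd_blind_on_disjoint_supports_general g₁ g₂ X₁ X₂ hX₁ hX₂ hdisj hg₁_pos hg₂_pos hg₁_zero hg₂_zero
    αp αq hαp₀ hαp₁ hαq₀ hαq₁ p q hp hq k
end
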